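/- arXiv:2006.12565 — 3 statements merged into one kernel-verified Lean document; each statement's English description precedes it below -/
import Mathlib

section
/- If z₁,…,z₅ are nonzero complex numbers, indices mod 5, satisfying 1 − zᵢ = z_{i−1}·z_{i+1} for all i, and none of the zᵢ equals 1, then there exist x, y ∈ ℂ with xy ≠ 0, x ≠ 1, y ≠ 1, xy ≠ 1 such that (z₁,…,z₅) = (x, (1−x)/(1−xy), (1−y)/(1−xy), y, 1−xy) up to the 5-fold cyclic symmetry; conversely, for any such x, y, the tuple (x, (1−x)/(1−xy), (1−y)/(1−xy), y, 1−xy) satisfies 1 − zᵢ = z_{i−1}z_{i+1} for all i ∈ ℤ/5. -/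
/-- The explicit 5-tuple `(x, (1−x)/(1−xy), (1−y)/(1−xy), y, 1−xy)`,
indexed by `ℤ/5`. -/
noncomputable def fiveTuple (x y : ℂ) : ZMod 5 → ℂ := fun i =>
  if i = 0 then x
  else if i = 1 then (1 - x) / (1 - x * y)
  else if i = 2 then (1 - y) / (1 - x * y)
  else if i = 3 then y
  else 1 - x * y

/-!
Writing `x = z 0` and `y = z 3`, the relations at the indices `4`, `0` and `3` solve for
`z 4 = 1 - x y`, `z 1 = (1 - x) / z 4` and `z 2 = (1 - y) / z 4`, so every solution is
`fiveTuple (z 0) (z 3)` itself, without a cyclic shift. The converse is a computation in the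
field `ℂ(x, y)` that only needs `1 - x y ≠ 0`.
-/

theorem ZMod.forall_five {P : ZMod 5 → Prop} : (∀ i, P i) ↔ P 0 ∧ P 1 ∧ P 2 ∧ P 3 ∧ P 4 := by
  refine ⟨fun h => ⟨h 0, h 1, h 2, h 3, h 4⟩, fun ⟨h0, h1, h2, h3, h4⟩ i => ?_⟩
  obtain rfl | rfl | rfl | rfl | rfl : i = 0 ∨ i = 1 ∨ i = 2 ∨ i = 3 ∨ i = 4 := by revert i; decide
  exacts [h0, h1, h2, h3, h4]

theorem forall_one_sub_eq_mul_iff {R : Type*} [Ring R] (z : ZMod 5 → R) :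
    (∀ i, 1 - z i = z (i - 1) * z (i + 1)) ↔
      1 - z 0 = z 4 * z 1 ∧ 1 - z 1 = z 0 * z 2 ∧ 1 - z 2 = z 1 * z 3 ∧
        1 - z 3 = z 2 * z 4 ∧ 1 - z 4 = z 3 * z 0 :=
  ZMod.forall_five

section
variable (x y : ℂ)
@[simp] lemma fiveTuple_zero : fiveTuple x y 0 = x := rfl
@[simp] lemma fiveTuple_one : fiveTuple x y 1 = (1 - x) / (1 - x * y) := rfl
@[simp] lemma fiveTuple_two : fiveTuple x y 2 = (1 - y) / (1 - x * y) := rfl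
@[simp] lemma fiveTuple_three : fiveTuple x y 3 = y := rfl
@[simp] lemma fiveTuple_four : fiveTuple x y 4 = 1 - x * y := rfl
end

lemma fiveTuple_one_sub_eq_mul {x y : ℂ} (hxy : x * y ≠ 1) (i : ZMod 5) :
    1 - fiveTuple x y i = fiveTuple x y (i - 1) * fiveTuple x y (i + 1) := by
  have hc : 1 - x * y ≠ 0 := sub_ne_zero.mpr hxy.symm
  -- `field_simp` meets some of the denominators in the commuted form `1 - y * x`.
  have hc' : 1 - y * x ≠ 0 := mul_comm x y ▸ hc
  revert i
  rw [forall_one_sub_eq_mul_iff]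
  simp only [fiveTuple_zero, fiveTuple_one, fiveTuple_two, fiveTuple_three, fiveTuple_four]
  refine ⟨?_, ?_, ?_, ?_, ?_⟩ <;> field_simp <;> ring

lemma eq_fiveTuple_of_one_sub_eq_mul {z : ZMod 5 → ℂ} (hz4 : z 4 ≠ 0)
    (hrel : ∀ i, 1 - z i = z (i - 1) * z (i + 1)) : z = fiveTuple (z 0) (z 3) := by
  obtain ⟨h0, -, -, h3, h4⟩ := (forall_one_sub_eq_mul_iff z).mp hrel
  have h4 : z 4 = 1 - z 0 * z 3 := by linear_combination -h4
  rw [h4] at hz4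
  funext i
  revert i
  rw [ZMod.forall_five]
  refine ⟨rfl, ?_, ?_, rfl, h4⟩
  · rw [fiveTuple_one, eq_div_iff hz4]
    linear_combination -h0 - z 1 * h4
  · rw [fiveTuple_two, eq_div_iff hz4]
    linear_combination -h3 - z 2 * h4

/-- Nonzero `z₁,…,z₅ ≠ 1` (indices mod 5) satisfy `1 − zᵢ = z_{i−1}z_{i+1}` for all
`i` if and only if, up to cyclic symmetry, they are of the form
`(x, (1−x)/(1−xy), (1−y)/(1−xy), y, 1−xy)` with `xy ≠ 0`, `x ≠ 1`, `y ≠ 1`, `xy ≠ 1`. -/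
theorem five_term_parametrization :
    (∀ z : ZMod 5 → ℂ, (∀ i, z i ≠ 0) → (∀ i, z i ≠ 1) →
      (∀ i, 1 - z i = z (i - 1) * z (i + 1)) →
      ∃ x y : ℂ, x * y ≠ 0 ∧ x ≠ 1 ∧ y ≠ 1 ∧ x * y ≠ 1 ∧
        ∃ k : ZMod 5, ∀ i : ZMod 5, z (i + k) = fiveTuple x y i) ∧
    (∀ x y : ℂ, x * y ≠ 0 → x ≠ 1 → y ≠ 1 → x * y ≠ 1 →
      ∀ i : ZMod 5, 1 - fiveTuple x y i = fiveTuple x y (i - 1) * fiveTuple x y (i + 1)) := by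
  refine ⟨fun z hz0 hz1 hrel => ?_, fun x y _ _ _ hxy => fiveTuple_one_sub_eq_mul hxy⟩
  have hz : z = fiveTuple (z 0) (z 3) := eq_fiveTuple_of_one_sub_eq_mul (hz0 4) hrel
  have hxy : z 0 * z 3 ≠ 1 := fun h => hz0 4 <| by rw [hz, fiveTuple_four, h, sub_self]
  refine ⟨z 0, z 3, mul_ne_zero (hz0 0) (hz0 3), hz1 0, hz1 3, hxy, 0, fun i => ?_⟩
  rw [add_zero, ← hz]
end

section
/- Euler's reflection identity: for z ∈ (0,1), Li₂(z) + Li₂(1−z) = π²/6 − log(z)·log(1−z). -/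
/-!
Set `g w = Li₂ w + Li₂ (1 - w) + log w · log (1 - w)`. Termwise differentiation gives
`Li₂' x = -log (1 - x) / x`, and the four terms of `g'` cancel in pairs on `(0,1)`. Since
`log w · log (1 - w) → 0` at both endpoints, `g` is continuous on `[0,1]`, so the mean value
theorem gives `g z = g 1 = Li₂ 1 = ζ(2) = π² / 6`.
-/

open Real Filter Set Topology Asymptotics

/-- The real dilogarithm on `(0,1)`, defined by its power series. -/
noncomputable def Li2R (x : ℝ) : ℝ := ∑' n : ℕ, x ^ (n + 1) / ((n : ℝ) + 1) ^ 2

lemma Li2R_zero : Li2R 0 = 0 := by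
  simp [Li2R]

lemma Li2R_one : Li2R 1 = π ^ 2 / 6 := by
  have h := (hasSum_nat_add_iff' 1).2 hasSum_zeta_two
  simp only [Finset.range_one, Finset.sum_singleton, Nat.cast_zero] at h
  norm_num at h
  simpa [Li2R] using h.tsum_eq

lemma summable_one_div_succ_sq : Summable fun n : ℕ => 1 / ((n : ℝ) + 1) ^ 2 := by
  exact_mod_cast (summable_nat_add_iff 1).2 (Real.summable_one_div_nat_pow.2 one_lt_two)

lemma continuousOn_Li2R : ContinuousOn Li2R (Icc (-1) 1) := by
  refine continuousOn_tsum (fun n => (continuous_pow _).continuousOn.div_const _)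
    summable_one_div_succ_sq fun n x hx => ?_
  rw [norm_div, norm_pow, norm_of_nonneg (by positivity : (0 : ℝ) ≤ ((n : ℝ) + 1) ^ 2)]
  gcongr
  exact pow_le_one₀ (norm_nonneg x) (abs_le.2 hx)

lemma hasSum_pow_div_log_div_of_abs_lt_one {x : ℝ} (hx : |x| < 1) (hx0 : x ≠ 0) :
    HasSum (fun n : ℕ => x ^ n / ((n : ℝ) + 1)) (-log (1 - x) / x) := by
  refine ((hasSum_pow_div_log_of_abs_lt_one hx).div_const x).congr_fun fun n => ?_
  rw [pow_succ]
  field_simp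

lemma hasDerivAt_Li2R {x : ℝ} (hx : |x| < 1) :
    HasDerivAt Li2R (∑' n : ℕ, x ^ n / ((n : ℝ) + 1)) x := by
  obtain ⟨r, hxr, hr1⟩ := exists_between hx
  have hr0 : 0 < r := (abs_nonneg x).trans_lt hxr
  refine hasDerivAt_tsum_of_isPreconnected (𝕜 := ℝ) (u := fun n : ℕ => r ^ n)
    (g := fun n y => y ^ (n + 1) / ((n : ℝ) + 1) ^ 2) (g' := fun n y => y ^ n / ((n : ℝ) + 1))
    (summable_geometric_of_lt_one hr0.le hr1)
    isOpen_Ioo (convex_Ioo (-r) r).isPreconnected (fun n y _ => ?_) (fun n y hy => ?_)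
    (y₀ := 0) ⟨neg_lt_zero.2 hr0, hr0⟩ ?_ (abs_lt.1 hxr)
  · refine ((hasDerivAt_pow (n + 1) y).div_const (((n : ℝ) + 1) ^ 2)).congr_deriv ?_
    push_cast
    field_simp
  · rw [norm_div, norm_pow, norm_of_nonneg (by positivity : (0 : ℝ) ≤ (n : ℝ) + 1)]
    calc ‖y‖ ^ n / ((n : ℝ) + 1) ≤ ‖y‖ ^ n := div_le_self (by positivity) (by simp)
      _ ≤ r ^ n := by gcongr; exact abs_le.2 ⟨hy.1.le, hy.2.le⟩
  · simp

lemma hasDerivAt_Li2R_of_ne_zero {x : ℝ} (hx : |x| < 1) (hx0 : x ≠ 0) :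
    HasDerivAt Li2R (-log (1 - x) / x) x :=
  (hasSum_pow_div_log_div_of_abs_lt_one hx hx0).tsum_eq ▸ hasDerivAt_Li2R hx

lemma continuousAt_log_mul_log_one_sub_zero :
    ContinuousAt (fun x => log x * log (1 - x)) 0 := by
  have hlog : (fun x => log (1 - x)) =O[𝓝 0] fun x => x := by
    simpa using (((hasDerivAt_id (0 : ℝ)).const_sub 1).log (by norm_num)).isBigO_sub
  have hmul : Tendsto (fun x => log x * x) (𝓝 0) (𝓝 0) := by
    simpa [mul_comm] using continuous_mul_log.tendsto 0
  simpa [ContinuousAt] using ((isBigO_refl log _).mul hlog).trans_tendsto hmul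

/-- With Lean's convention `log 0 = 0` this holds on all of `ℝ`, the endpoints included. -/
lemma continuous_log_mul_log_one_sub : Continuous fun x => log x * log (1 - x) := by
  refine continuous_iff_continuousAt.2 fun x => ?_
  rcases eq_or_ne x 0 with rfl | hx0
  · exact continuousAt_log_mul_log_one_sub_zero
  rcases eq_or_ne x 1 with rfl | hx1
  · have := continuousAt_log_mul_log_one_sub_zero.comp_of_eq
      (continuous_const.sub continuous_id).continuousAt (sub_self (1 : ℝ))
    simpa [Function.comp_def, mul_comm] using this
  exact (continuousAt_log hx0).mul ((continuousAt_log (sub_ne_zero.2 hx1.symm)).comp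
    (continuous_const.sub continuous_id).continuousAt)

lemma hasDerivAt_Li2R_add_Li2R_one_sub_add_log_mul_log {w : ℝ} (hw : w ∈ Ioo 0 1) :
    HasDerivAt (fun w => Li2R w + Li2R (1 - w) + log w * log (1 - w)) 0 w := by
  obtain ⟨hw0, hw1⟩ := hw
  have habs : |w| < 1 := abs_lt.2 ⟨by linarith, hw1⟩
  have habs' : |1 - w| < 1 := abs_lt.2 ⟨by linarith, by linarith⟩
  have hone_sub : HasDerivAt (fun w : ℝ => 1 - w) (-1) w := by
    simpa using (hasDerivAt_id w).const_sub 1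
  have hLi := hasDerivAt_Li2R_of_ne_zero habs hw0.ne'
  have hLi' := (hasDerivAt_Li2R_of_ne_zero habs' (by linarith)).comp w hone_sub
  have hlog := (hasDerivAt_log hw0.ne').mul (hone_sub.log (by linarith))
  refine ((hLi.add hLi').add hlog).congr_deriv ?_
  rw [sub_sub_cancel]
  field_simp
  ring

/-- Euler's reflection identity: for `z ∈ (0,1)`,
`Li₂(z) + Li₂(1−z) = π²/6 − log(z)·log(1−z)`. -/
theorem euler_reflection (z : ℝ) (hz : z ∈ Set.Ioo (0 : ℝ) 1) :
    Li2R z + Li2R (1 - z) = Real.pi ^ 2 / 6 - Real.log z * Real.log (1 - z) := by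
  set g : ℝ → ℝ := fun w => Li2R w + Li2R (1 - w) + log w * log (1 - w)
  have hg_cont : ContinuousOn g (Icc z 1) := by
    refine ((continuousOn_Li2R.mono ?_).add ?_).add continuous_log_mul_log_one_sub.continuousOn
    · exact Icc_subset_Icc (by linarith [hz.1]) le_rfl
    · refine continuousOn_Li2R.comp (continuous_const.sub continuous_id).continuousOn ?_
      intro w hw
      exact ⟨by linarith [hw.2], by linarith [hz.1, hw.1]⟩
  obtain ⟨-, -, hslope⟩ := exists_hasDerivAt_eq_slope g (fun _ => 0) hz.2 hg_cont
    fun w hw => hasDerivAt_Li2R_add_Li2R_one_sub_add_log_mul_log ⟨hz.1.trans hw.1, hw.2⟩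
  have hg_one : g 1 = π ^ 2 / 6 := by simp [g, Li2R_one, Li2R_zero]
  have hgz : g 1 - g z = 0 :=
    (div_eq_zero_iff.1 hslope.symm).resolve_right (sub_ne_zero.2 hz.2.ne')
  rw [hg_one] at hgz
  simp only [g] at hgz
  linarith
end

section
/- Monodromy of the enhanced Rogers dilogarithm: fix z₀ ∈ (0,1) and lifts u₁ = log z₀, u₂ = log(1−z₀) (real logarithms). Let L(u₁,u₂) denote any function on {(u₁,u₂) ∈ ℂ² : e^{u₁}+e^{u₂}=1} with dL = (u₁ du₂ − u₂ du₁)/2 and L(u₁,u₂) ≡ Li₂(e^{u₁}) + (1/2)u₁u₂ mod 4π²ℤ near (log z₀, log(1−z₀)). Then for all (n₁,n₂) ∈ ℤ², L(u₁ + 2πi n₁, u₂ + 2πi n₂) ≡ L(u₁,u₂) + πi(n₁u₂ − n₂u₁) + 2π²n₁n₂ mod 4π²·ℤ. -/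
open Complex

/-- The dilogarithm, defined by its power series (its analytic continuation is
only used near the base point, where the series converges). -/
noncomputable def Li2 (z : ℂ) : ℂ := ∑' n : ℕ, z ^ (n + 1) / ((n : ℂ) + 1) ^ 2

/-!
Under `u₁ ↦ u₁ + 2πin` the form `(u₁ du₂ - u₂ du₁)/2` changes by `πin du₂`, so
`L(u₁ + 2πin, u₂) - L(u₁, u₂) - πinu₂` is constant along paths in the surface. Every point of
the surface is joined by an explicit path to one with `Re u₁ < 0`. There, on the sheet
`u₂ = log(1 - e^{u₁}) + 2πik`, the function `L - Li₂(e^{u₁}) - u₁u₂/2 + 2πik u₁` is constant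
because `d Li₂(e^{u₁}) = -log(1 - e^{u₁}) du₁`, and `Li₂(e^{u₁})` is single-valued on the loop
`u₁ ↦ u₁ + 2πin`; this gives the value `4π²nk`. The second coordinate follows from the symmetry
`L ↦ -L(u₂, u₁)`, and composing the two shifts produces `-2π²n₁n₂ ≡ 2π²n₁n₂ (mod 4π²)`.
-/

open scoped Real

theorem hasDerivAt_Li2_exp {w : ℂ} (hw : w.re < 0) :
    HasDerivAt (fun v => Li2 (exp v)) (-log (1 - exp w)) w := by
  obtain ⟨r, hwr, hr⟩ := exists_between hw
  have hgeom : Summable fun n : ℕ => Real.exp r ^ (n + 1) :=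
    (summable_geometric_of_lt_one (Real.exp_pos r).le (Real.exp_lt_one_iff.mpr hr)).comp_injective
      (add_left_injective 1)
  have hnorm : ∀ (n k : ℕ) (v : ℂ), v.re < r →
      ‖exp v ^ (n + 1) / ((n : ℂ) + 1) ^ k‖ ≤ Real.exp r ^ (n + 1) := by
    intro n k v hv
    rw [norm_div, norm_pow, norm_pow, norm_exp]
    refine div_le_of_le_mul₀ (by positivity) (by positivity) ?_
    have h1 : (1 : ℝ) ≤ ‖(n : ℂ) + 1‖ ^ k := one_le_pow₀ (by norm_cast; simp)
    calc Real.exp v.re ^ (n + 1) ≤ Real.exp r ^ (n + 1) :=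
          pow_le_pow_left₀ (Real.exp_pos _).le (Real.exp_le_exp.mpr hv.le) _
      _ ≤ Real.exp r ^ (n + 1) * ‖(n : ℂ) + 1‖ ^ k := le_mul_of_one_le_right (by positivity) h1
  have hderiv := hasDerivAt_tsum_of_isPreconnected (t := {v : ℂ | v.re < r}) (y₀ := w)
    (g := fun (n : ℕ) v => exp v ^ (n + 1) / ((n : ℂ) + 1) ^ 2)
    (g' := fun (n : ℕ) v => exp v ^ (n + 1) / ((n : ℂ) + 1) ^ 1) hgeom
    (isOpen_lt continuous_re continuous_const) (convex_halfSpace_re_lt r).isPreconnected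
    (fun n v _ => by
      have := ((hasDerivAt_exp v).pow (n + 1)).div_const (((n : ℂ) + 1) ^ 2)
      refine this.congr_deriv ?_
      rw [Nat.add_sub_cancel, mul_assoc, ← pow_succ]
      push_cast
      field_simp)
    (fun n v hv => hnorm n 1 v hv) hwr
    (Summable.of_norm_bounded hgeom fun n => hnorm n 2 w hwr) hwr
  have hlog := hasSum_taylorSeries_neg_log' (z := exp w)
    (by rw [norm_exp]; exact Real.exp_lt_one_iff.mpr hw)
  simp only [pow_one, hlog.tsum_eq] at hderiv
  exact hderiv

theorem one_sub_exp_mem_slitPlane_iff {w : ℂ} :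
    1 - exp w ∈ slitPlane ↔ w.re < 0 ∨ Real.cos w.im ≠ 1 := by
  have hx := Real.exp_pos w.re
  rw [mem_slitPlane_iff, sub_re, sub_im, one_re, one_im, exp_re, exp_im]
  constructor
  · intro h
    by_contra! hc
    have hsin : Real.sin w.im = 0 := Real.sin_eq_zero_iff_cos_eq.mpr (Or.inl hc.2)
    simp only [hc.2, hsin, mul_one, mul_zero, sub_zero, ne_eq, not_true_eq_false,
      or_false] at h
    linarith [Real.one_le_exp hc.1]
  · rintro (hre | hcos)
    · left
      nlinarith [Real.exp_lt_one_iff.mpr hre, Real.cos_le_one w.im]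
    · by_cases hsin : Real.sin w.im = 0
      · have hcos' := (Real.sin_eq_zero_iff_cos_eq.mp hsin).resolve_left hcos
        left
        rw [hcos']
        linarith
      · right
        simp [hx.ne', hsin]

theorem exp_add_exp_log_one_sub_exp_add {w c : ℂ} (hw : 1 - exp w ≠ 0) (hc : exp c = 1) :
    exp w + exp (log (1 - exp w) + c) = 1 := by
  rw [exp_add, exp_log hw, hc]
  ring

theorem exp_sub_log_one_sub_exp {u₁ u₂ : ℂ} (hu : exp u₁ + exp u₂ = 1) :
    exp (u₂ - log (1 - exp u₁)) = 1 := by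
  have h : 1 - exp u₁ = exp u₂ := by linear_combination -hu
  rw [exp_sub, h, exp_log (exp_ne_zero _), div_self (exp_ne_zero _)]

theorem hasDerivAt_log_one_sub_exp_add {γ : ℝ → ℂ} {γ' : ℂ} {t : ℝ} (hγ : HasDerivAt γ γ' t)
    (hslit : 1 - exp (γ t) ∈ slitPlane) (c : ℂ) :
    HasDerivAt (fun s => log (1 - exp (γ s)) + c) (-(exp (γ t) * γ') / (1 - exp (γ t))) t := by
  have h := hγ.cexp.const_sub 1
  exact (h.clog_real hslit).add_const c

theorem exp_add_two_pi_I_mul_intCast (u : ℂ) (n : ℤ) : exp (u + 2 * π * I * n) = exp u := by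
  rw [mul_comm _ (n : ℂ), exp_periodic.int_mul n]

/-- Paths below are parametrised by all of `ℝ`: the ramp goes from `0` at `t = 0` to `1` at
`t = 1` without leaving `[0, 1]`. -/
noncomputable def ramp (t : ℝ) : ℝ := (1 - Real.cos (π * t)) / 2

theorem hasDerivAt_ramp (t : ℝ) : HasDerivAt ramp (π * Real.sin (π * t) / 2) t := by
  have h := (((hasDerivAt_id t).const_mul π).cos.const_sub 1).div_const 2
  refine h.congr_deriv ?_
  simp only [mul_one, id]
  ring

theorem ramp_mem_Icc (t : ℝ) : ramp t ∈ Set.Icc 0 1 := by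
  have := Real.neg_one_le_cos (π * t)
  have := Real.cos_le_one (π * t)
  constructor <;> unfold ramp <;> linarith

@[simp] theorem ramp_zero : ramp 0 = 0 := by simp [ramp]

@[simp] theorem ramp_one : ramp 1 = 1 := by simp [ramp]

/-- `dL = (u₁ du₂ - u₂ du₁)/2` on the surface `e^{u₁} + e^{u₂} = 1`, tested along differentiable
paths. -/
def HasRogersDifferential (L : ℂ × ℂ → ℂ) : Prop :=
  ∀ (γ δ γ' δ' : ℝ → ℂ),
    (∀ t, exp (γ t) + exp (δ t) = 1) →
    (∀ t, HasDerivAt γ (γ' t) t) → (∀ t, HasDerivAt δ (δ' t) t) →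
    ∀ t, HasDerivAt (fun s => L (γ s, δ s)) ((γ t * δ' t - δ t * γ' t) / 2) t

def FirstMonodromyAt (L : ℂ × ℂ → ℂ) (u₁ u₂ : ℂ) : Prop :=
  ∀ n : ℤ, ∃ m : ℤ, L (u₁ + 2 * π * I * n, u₂) = L (u₁, u₂) + π * I * n * u₂ + 4 * π ^ 2 * m

namespace HasRogersDifferential

variable {L : ℂ × ℂ → ℂ} (hL : HasRogersDifferential L)
include hL

theorem swap : HasRogersDifferential fun p => -L (p.2, p.1) := by
  intro γ δ γ' δ' hS hγ hδ t
  refine (hL δ γ δ' γ' (fun t => by rw [add_comm]; exact hS t) hδ hγ t).neg.congr_deriv ?_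
  ring

theorem shift_sub_eq {γ δ γ' δ' : ℝ → ℂ} (hS : ∀ t, exp (γ t) + exp (δ t) = 1)
    (hγ : ∀ t, HasDerivAt γ (γ' t) t) (hδ : ∀ t, HasDerivAt δ (δ' t) t)
    {a : ℂ} (ha : exp a = 1) (s t : ℝ) :
    L (γ s + a, δ s) - L (γ s, δ s) - a * δ s / 2
      = L (γ t + a, δ t) - L (γ t, δ t) - a * δ t / 2 := by
  have hSa : ∀ t, exp (γ t + a) + exp (δ t) = 1 := fun t => by rw [exp_add, ha, mul_one, hS]
  have hderiv : ∀ r, HasDerivAt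
      (fun x => L (γ x + a, δ x) - L (γ x, δ x) - a * δ x / 2) 0 r := fun r => by
    have h := ((hL _ _ _ _ hSa (fun t => (hγ t).add_const a) hδ r).sub
      (hL _ _ _ _ hS hγ hδ r)).sub (((hδ r).const_mul a).div_const 2)
    exact h.congr_deriv (by ring)
  exact is_const_of_deriv_eq_zero (fun r => (hderiv r).differentiableAt)
    (fun r => (hderiv r).deriv) s t

theorem firstMonodromyAt_of_path {γ δ γ' δ' : ℝ → ℂ} (hS : ∀ t, exp (γ t) + exp (δ t) = 1)
    (hγ : ∀ t, HasDerivAt γ (γ' t) t) (hδ : ∀ t, HasDerivAt δ (δ' t) t) {s t : ℝ}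
    (h : FirstMonodromyAt L (γ s) (δ s)) : FirstMonodromyAt L (γ t) (δ t) := by
  intro n
  obtain ⟨m, hm⟩ := h n
  have ha : exp (2 * π * I * n) = 1 := by simpa using exp_add_two_pi_I_mul_intCast 0 n
  refine ⟨m, ?_⟩
  linear_combination hm - hL.shift_sub_eq hS hγ hδ ha s t

theorem hasDerivAt_sub_Li2_exp {γ γ' : ℝ → ℂ} (hγ : ∀ t, HasDerivAt γ (γ' t) t)
    (hre : ∀ t, (γ t).re < 0) {c : ℂ} (hc : exp c = 1) (t : ℝ) :
    HasDerivAt (fun s => L (γ s, log (1 - exp (γ s)) + c) - Li2 (exp (γ s))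
      - γ s * (log (1 - exp (γ s)) + c) / 2 + c * γ s) 0 t := by
  have hslit : ∀ t, 1 - exp (γ t) ∈ slitPlane :=
    fun t => one_sub_exp_mem_slitPlane_iff.mpr (Or.inl (hre t))
  have hδ := fun t => hasDerivAt_log_one_sub_exp_add (hγ t) (hslit t) c
  have hS := fun t => exp_add_exp_log_one_sub_exp_add (slitPlane_ne_zero (hslit t)) hc
  have h := (((hL _ _ _ _ hS hγ hδ t).sub ((hasDerivAt_Li2_exp (hre t)).comp t (hγ t))).sub
    (((hγ t).mul (hδ t)).div_const 2)).add ((hγ t).const_mul c)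
  exact h.congr_deriv (by ring)

theorem firstMonodromyAt_of_re_neg {u₁ u₂ : ℂ} (hu : exp u₁ + exp u₂ = 1) (hre : u₁.re < 0) :
    FirstMonodromyAt L u₁ u₂ := by
  intro n
  set c := u₂ - log (1 - exp u₁)
  have hc : exp c = 1 := exp_sub_log_one_sub_exp hu
  obtain ⟨k, hk⟩ := exp_eq_one_iff.mp hc
  have hγ (t : ℝ) : HasDerivAt (fun s : ℝ => u₁ + 2 * π * I * n * s) (2 * π * I * n) t := by
    simpa using ((hasDerivAt_id t).ofReal_comp.const_mul (2 * π * I * n)).const_add u₁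
  have hconst := is_const_of_deriv_eq_zero
    (fun t => (hL.hasDerivAt_sub_Li2_exp hγ (fun t => by simpa using hre) hc t).differentiableAt)
    (fun t => (hL.hasDerivAt_sub_Li2_exp hγ (fun t => by simpa using hre) hc t).deriv) 1 0
  simp only [ofReal_one, ofReal_zero, mul_one, mul_zero, add_zero,
    exp_add_two_pi_I_mul_intCast] at hconst
  have hu₂ : log (1 - exp u₁) + c = u₂ := by ring
  rw [hu₂] at hconst
  refine ⟨n * k, ?_⟩
  push_cast
  linear_combination hconst - 2 * π * I * n * hk - 4 * π ^ 2 * n * k * I_sq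

theorem firstMonodromyAt_of_one_sub_exp_mem_slitPlane {u₁ u₂ : ℂ} (hu : exp u₁ + exp u₂ = 1)
    (hslit : 1 - exp u₁ ∈ slitPlane) : FirstMonodromyAt L u₁ u₂ := by
  let γ : ℝ → ℂ := fun t => u₁ - (ramp t * (u₁.re + 1) : ℝ)
  have hγ (t : ℝ) : HasDerivAt γ (-(π * Real.sin (π * t) / 2 * (u₁.re + 1) : ℝ)) t :=
    ((hasDerivAt_ramp t).mul_const _).ofReal_comp.const_sub u₁
  have hγslit (t : ℝ) : 1 - exp (γ t) ∈ slitPlane := by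
    obtain ⟨h0, h1⟩ := ramp_mem_Icc t
    refine one_sub_exp_mem_slitPlane_iff.mpr ?_
    simp only [γ, sub_re, sub_im, ofReal_re, ofReal_im, sub_zero]
    rcases one_sub_exp_mem_slitPlane_iff.mp hslit with h | h
    · left
      rcases le_or_gt u₁.re (-1) with h' | h' <;> nlinarith
    · exact Or.inr h
  let c := u₂ - log (1 - exp u₁)
  have hc : exp c = 1 := exp_sub_log_one_sub_exp hu
  have hS t := exp_add_exp_log_one_sub_exp_add (slitPlane_ne_zero (hγslit t)) hc
  have hend : FirstMonodromyAt L (γ 1) (log (1 - exp (γ 1)) + c) :=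
    hL.firstMonodromyAt_of_re_neg (hS 1) (by simp [γ])
  have h := hL.firstMonodromyAt_of_path hS hγ
    (fun t => hasDerivAt_log_one_sub_exp_add (hγ t) (hγslit t) c) hend (t := 0)
  simpa [γ, c] using h

theorem firstMonodromyAt_of_exp_snd_neg {u₁ u₂ : ℂ} (hu : exp u₁ + exp u₂ = 1)
    (hre : (exp u₂).re < 0) (him : (exp u₂).im = 0) : FirstMonodromyAt L u₁ u₂ := by
  -- A quarter turn of `u₂` moves `e^{u₁} = 1 - e^{u₂}` off the real axis.
  let δ : ℝ → ℂ := fun t => u₂ + (ramp t * (π / 2) : ℝ) * I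
  have hδ (t : ℝ) : HasDerivAt δ ((π * Real.sin (π * t) / 2 * (π / 2) : ℝ) * I) t :=
    (((hasDerivAt_ramp t).mul_const _).ofReal_comp.mul_const I).const_add u₂
  have hexpδ (t : ℝ) : exp (δ t) = exp u₂ * exp ((ramp t * (π / 2) : ℝ) * I) := exp_add _ _
  have hδslit (t : ℝ) : 1 - exp (δ t) ∈ slitPlane := by
    obtain ⟨h0, h1⟩ := ramp_mem_Icc t
    have hcos : 0 ≤ Real.cos (ramp t * (π / 2)) :=
      Real.cos_nonneg_of_mem_Icc ⟨by nlinarith [Real.pi_pos], by nlinarith [Real.pi_pos]⟩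
    rw [mem_slitPlane_iff, sub_re, one_re, hexpδ, mul_re, exp_ofReal_mul_I_re,
      exp_ofReal_mul_I_im, him]
    left
    nlinarith
  let c := u₁ - log (1 - exp u₂)
  have hc : exp c = 1 := exp_sub_log_one_sub_exp (by rwa [add_comm] at hu)
  have hS (t : ℝ) : exp (log (1 - exp (δ t)) + c) + exp (δ t) = 1 := by
    rw [add_comm]
    exact exp_add_exp_log_one_sub_exp_add (slitPlane_ne_zero (hδslit t)) hc
  have hend : FirstMonodromyAt L (log (1 - exp (δ 1)) + c) (δ 1) := by
    refine hL.firstMonodromyAt_of_one_sub_exp_mem_slitPlane (hS 1) ?_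
    rw [show 1 - exp (log (1 - exp (δ 1)) + c) = exp (δ 1) by linear_combination -(hS 1),
      mem_slitPlane_iff, hexpδ, ramp_one, mul_im, exp_ofReal_mul_I_re, exp_ofReal_mul_I_im, him]
    right
    simpa using hre.ne
  have h := hL.firstMonodromyAt_of_path hS
    (fun t => hasDerivAt_log_one_sub_exp_add (hδ t) (hδslit t) c) hδ hend (t := 0)
  simpa [δ, c] using h

theorem firstMonodromyAt {u₁ u₂ : ℂ} (hu : exp u₁ + exp u₂ = 1) : FirstMonodromyAt L u₁ u₂ := by
  by_cases hslit : 1 - exp u₁ ∈ slitPlane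
  · exact hL.firstMonodromyAt_of_one_sub_exp_mem_slitPlane hu hslit
  rw [show 1 - exp u₁ = exp u₂ by linear_combination -hu, mem_slitPlane_iff, not_or, not_lt,
    not_ne_iff] at hslit
  obtain ⟨hre, him⟩ := hslit
  refine hL.firstMonodromyAt_of_exp_snd_neg hu (hre.lt_of_ne fun h => ?_) him
  exact exp_ne_zero u₂ (Complex.ext h him)

theorem exists_second_monodromy {u₁ u₂ : ℂ} (hu : exp u₁ + exp u₂ = 1) (n : ℤ) :
    ∃ m : ℤ, L (u₁, u₂ + 2 * π * I * n) = L (u₁, u₂) - π * I * n * u₁ + 4 * π ^ 2 * m := by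
  obtain ⟨m, hm⟩ := hL.swap.firstMonodromyAt (u₁ := u₂) (u₂ := u₁) (by rwa [add_comm]) n
  exact ⟨-m, by push_cast; linear_combination -hm⟩

end HasRogersDifferential

theorem enhanced_Rogers_monodromy_general
    (L : ℂ × ℂ → ℂ)
    (hdL : ∀ (γ δ γ' δ' : ℝ → ℂ),
      (∀ t, Complex.exp (γ t) + Complex.exp (δ t) = 1) →
      (∀ t, HasDerivAt γ (γ' t) t) → (∀ t, HasDerivAt δ (δ' t) t) →
      ∀ t, HasDerivAt (fun s => L (γ s, δ s)) ((γ t * δ' t - δ t * γ' t) / 2) t) :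
    ∀ u₁ u₂ : ℂ, Complex.exp u₁ + Complex.exp u₂ = 1 →
      ∀ n₁ n₂ : ℤ, ∃ m : ℤ,
        L (u₁ + 2 * Real.pi * Complex.I * n₁, u₂ + 2 * Real.pi * Complex.I * n₂) =
          L (u₁, u₂) + Real.pi * Complex.I * (n₁ * u₂ - n₂ * u₁) +
            2 * Real.pi ^ 2 * (n₁ * n₂) + 4 * Real.pi ^ 2 * m := by
  intro u₁ u₂ hu n₁ n₂
  have hL : HasRogersDifferential L := hdL
  obtain ⟨m₂, h₂⟩ := hL.exists_second_monodromy hu n₂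
  obtain ⟨m₁, h₁⟩ := hL.firstMonodromyAt (u₁ := u₁) (u₂ := u₂ + 2 * π * I * n₂)
    (by rwa [exp_add_two_pi_I_mul_intCast]) n₁
  refine ⟨m₁ + m₂ - n₁ * n₂, ?_⟩
  push_cast
  linear_combination h₁ + h₂ + 2 * π ^ 2 * n₁ * n₂ * I_sq

/-- Monodromy of the enhanced Rogers dilogarithm.  Let `L` be any function on the
surface `{(u₁,u₂) : e^{u₁}+e^{u₂}=1}` with `dL = (u₁ du₂ − u₂ du₁)/2` (expressed
via differentiable paths in the surface) which agrees with
`Li₂(e^{u₁}) + ½u₁u₂ mod 4π²ℤ` near the base point `(log z₀, log(1−z₀))`,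
`z₀ ∈ (0,1)`.  Then for all `(n₁,n₂) ∈ ℤ²`,
`L(u₁+2πin₁, u₂+2πin₂) ≡ L(u₁,u₂) + πi(n₁u₂−n₂u₁) + 2π²n₁n₂ mod 4π²ℤ`. -/
theorem enhanced_Rogers_monodromy
    (z₀ : ℝ) (hz₀ : z₀ ∈ Set.Ioo (0 : ℝ) 1)
    (L : ℂ × ℂ → ℂ)
    (hdL : ∀ (γ δ γ' δ' : ℝ → ℂ),
      (∀ t, Complex.exp (γ t) + Complex.exp (δ t) = 1) →
      (∀ t, HasDerivAt γ (γ' t) t) → (∀ t, HasDerivAt δ (δ' t) t) →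
      ∀ t, HasDerivAt (fun s => L (γ s, δ s)) ((γ t * δ' t - δ t * γ' t) / 2) t)
    (hbase : ∃ ε > (0 : ℝ), ∀ u₁ u₂ : ℂ,
      Complex.exp u₁ + Complex.exp u₂ = 1 →
      ‖u₁ - (Real.log z₀ : ℂ)‖ < ε → ‖u₂ - (Real.log (1 - z₀) : ℂ)‖ < ε →
      ∃ m : ℤ, L (u₁, u₂) =
        Li2 (Complex.exp u₁) + u₁ * u₂ / 2 + 4 * Real.pi ^ 2 * m) :
    ∀ u₁ u₂ : ℂ, Complex.exp u₁ + Complex.exp u₂ = 1 →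
      ∀ n₁ n₂ : ℤ, ∃ m : ℤ,
        L (u₁ + 2 * Real.pi * Complex.I * n₁, u₂ + 2 * Real.pi * Complex.I * n₂) =
          L (u₁, u₂) + Real.pi * Complex.I * (n₁ * u₂ - n₂ * u₁) +
            2 * Real.pi ^ 2 * (n₁ * n₂) + 4 * Real.pi ^ 2 * m :=
  enhanced_Rogers_monodromy_general L hdL
end
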